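/- Let $\mathbf{A}$ be an integral domain with quotient field mapping onto $\mathbb{C}$ via a ring homomorphism $\mathsf{cl}$ with kernel generated by $(q-1)$, and let $M$ be a free $\mathbf{A}$-module of finite rank with a symmetric $\mathbf{A}$-bilinear form $(\,,\,)$ such that the induced $\mathbb{C}$-bilinear form on $M/(q-1)M$ is positive definite on the $\mathbb{Q}$-span of a basis. Then for every $v \in M$ with $\mathsf{cl}(v) \neq 0$ one has $(v, v') \neq 0$ whenever $\mathsf{cl}(v') = \mathsf{cl}(v)$; in particular, in the quantum group setting, for every nonzero $v \in L_{\mathbb{Q}(q^{1/d})}(\lambda)$ one has $(\overline{v}, v) \neq 0$ for the Shapovalov form. -/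

import Mathlib

open scoped BigOperators

/-- Let `A` be a domain with a ring homomorphism `cl : A → ℂ` whose kernel is generated by
`q - 1`, and `M` a free `A`-module of finite rank with a symmetric bilinear form whose
specialization is positive definite on the rational span of a basis.  Then for vectors
`v, v'` whose specializations agree and are nonzero (with rational coordinates `t ≠ 0`),
one has `(v, v') ≠ 0`.  (In the quantum group setting: `(v̄, v) ≠ 0` for the Shapovalov
form on `L_{ℚ(q^{1/d})}(λ)`.) -/
theorem stmt15
    (A : Type*) [CommRing A] [IsDomain A]
    (qA : A) (cl : A →+* ℂ)
    (hker : RingHom.ker cl = Ideal.span {qA - 1})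
    (M : Type*) [AddCommGroup M] [Module A M]
    (ι : Type*) [Fintype ι] [DecidableEq ι]
    (bas : Module.Basis ι A M)
    (Bf : M →ₗ[A] M →ₗ[A] A)
    (hsymm : ∀ x y : M, Bf x y = Bf y x)
    (ratval : ι → ι → ℚ)
    (hrat : ∀ i j : ι, cl (Bf (bas i) (bas j)) = (ratval i j : ℂ))
    (hpos : ∀ t : ι → ℚ, t ≠ 0 → 0 < ∑ i, ∑ j, t i * t j * ratval i j) :
    ∀ (v v' : M) (t : ι → ℚ), t ≠ 0 →
      (∀ i, cl (bas.repr v i) = (t i : ℂ)) →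
      (∀ i, cl (bas.repr v' i) = (t i : ℂ)) →
      Bf v v' ≠ 0 := by
  intro v v' t ht hv hv' hzero
  have hratsym : ∀ i j : ι, ratval i j = ratval j i := by
    intro i j
    have := hsymm (bas i) (bas j)
    have h2 : (ratval i j : ℂ) = (ratval j i : ℂ) := by rw [← hrat, ← hrat, this]
    exact_mod_cast h2
  have key : cl (Bf v v') = ∑ i, ∑ j, (t i : ℂ) * ((t j : ℂ) * (ratval i j : ℂ)) := by
    conv_lhs => rw [← bas.sum_repr v, ← bas.sum_repr v']
    simp [map_sum, Finset.mul_sum, hrat, hv, hv', mul_assoc, -Module.Basis.sum_repr]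
    exact Finset.sum_congr rfl fun i _ => Finset.sum_congr rfl fun j _ => by
      rw [hratsym j i]
  have key2 : cl (Bf v v') = ((∑ i, ∑ j, t i * t j * ratval i j : ℚ) : ℂ) := by
    rw [key]; push_cast; simp [mul_assoc]
  rw [hzero, map_zero] at key2
  have hpos' := hpos t ht
  exact absurd key2.symm (by exact_mod_cast hpos'.ne')
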